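/- A pair (E,M) of classes of morphisms in a V-category B is a V-factorization system on B if and only if (E,M) is an ordinary factorization system on the underlying ordinary category of B and each e ∈ E is V-orthogonal to each m ∈ M. -/

import Mathlib

open CategoryTheory CategoryTheory.Limits CategoryTheory.MonoidalCategory

universe w v₁ v₂ v₃ v₄ u₁ u₂ u₃ u₄

namespace EnrichedFS

variable (V : Type u₁) [Category.{v₁} V] [MonoidalCategory V] [SymmetricCategory V]
  [MonoidalClosed V]
variable (B : Type u₂) [Category.{v₂} B] [EnrichedOrdinaryCategory V B]

/-- `e` is `V`-orthogonal to `m`: the square of hom-objects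
with top `B(A₂,m)`, left `B(e,X₁)`, right `B(e,X₂)`, bottom `B(A₁,m)`
is a pullback in `V`. -/
def VOrth {A₁ A₂ X₁ X₂ : B} (e : A₁ ⟶ A₂) (m : X₁ ⟶ X₂) : Prop :=
  IsPullback (eHomWhiskerLeft V A₂ m) (eHomWhiskerRight V e X₁)
    (eHomWhiskerRight V e X₂) (eHomWhiskerLeft V A₁ m)

/-- `H^{↓V}`: the class of morphisms to which every member of `H` is `V`-orthogonal. -/
def vRlp (H : MorphismProperty B) : MorphismProperty B :=
  fun _ _ m => ∀ ⦃A₁ A₂ : B⦄ (e : A₁ ⟶ A₂), H e → VOrth V B e m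

/-- `M^{↑V}`: the class of morphisms which are `V`-orthogonal to every member of `M`. -/
def vLlp (M : MorphismProperty B) : MorphismProperty B :=
  fun _ _ e => ∀ ⦃X₁ X₂ : B⦄ (m : X₁ ⟶ X₂), M m → VOrth V B e m

/-- ordinary orthogonality: unique diagonal fillers for every commutative square. -/
def OrdOrth {A₁ A₂ X₁ X₂ : B} (e : A₁ ⟶ A₂) (m : X₁ ⟶ X₂) : Prop :=
  ∀ (u : A₁ ⟶ X₁) (v : A₂ ⟶ X₂), u ≫ m = e ≫ v →
    ∃! d : A₂ ⟶ X₁, e ≫ d = u ∧ d ≫ m = v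

/-- `H^{↓}` (ordinary). -/
def ordRlp (H : MorphismProperty B) : MorphismProperty B :=
  fun _ _ m => ∀ ⦃A₁ A₂ : B⦄ (e : A₁ ⟶ A₂), H e → OrdOrth B e m

/-- `M^{↑}` (ordinary). -/
def ordLlp (M : MorphismProperty B) : MorphismProperty B :=
  fun _ _ e => ∀ ⦃X₁ X₂ : B⦄ (m : X₁ ⟶ X₂), M m → OrdOrth B e m

/-- `(E,M)` is a `V`-prefactorization system: `E^{↓V} = M` and `M^{↑V} = E`. -/
def IsVPrefactorization (E M : MorphismProperty B) : Prop :=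
  vRlp V B E = M ∧ vLlp V B M = E

/-- `(E,M)` is an ordinary prefactorization system. -/
def IsOrdPrefactorization (E M : MorphismProperty B) : Prop :=
  ordRlp B E = M ∧ ordLlp B M = E

/-- every morphism factors as a morphism in `E` followed by a morphism in `M`. -/
def FactorizationsExist (E M : MorphismProperty B) : Prop :=
  ∀ ⦃X Y : B⦄ (f : X ⟶ Y), ∃ (Z : B) (e : X ⟶ Z) (m : Z ⟶ Y), E e ∧ M m ∧ e ≫ m = f

/-- `(E,M)` is a `V`-factorization system. -/
def IsVFactorizationSystem (E M : MorphismProperty B) : Prop :=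
  IsVPrefactorization V B E M ∧ FactorizationsExist B E M

/-- `(E,M)` is an ordinary factorization system. -/
def IsOrdFactorizationSystem (E M : MorphismProperty B) : Prop :=
  IsOrdPrefactorization B E M ∧ FactorizationsExist B E M

/-- intersection of two classes of morphisms. -/
def interProp (M N : MorphismProperty B) : MorphismProperty B := fun _ _ f => M f ∧ N f

/-- `V`-monomorphisms. -/
def vMono : MorphismProperty B := fun _ _ m => ∀ A : B, Mono (eHomWhiskerLeft V A m)

/-- `V`-epimorphisms. -/
def vEpi : MorphismProperty B := fun _ _ e => ∀ A : B, Mono (eHomWhiskerRight V e A)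

/-- `V`-strong monomorphisms. -/
def vStrongMono : MorphismProperty B := fun _ _ m =>
  vMono V B m ∧ ∀ ⦃A₁ A₂ : B⦄ (e : A₁ ⟶ A₂), vEpi V B e → VOrth V B e m

/-- `V`-strong epimorphisms. -/
def vStrongEpi : MorphismProperty B := fun _ _ e =>
  vEpi V B e ∧ ∀ ⦃X₁ X₂ : B⦄ (m : X₁ ⟶ X₂), vMono V B m → VOrth V B e m

/-- ordinary monomorphisms, as a class. -/
def ordMono : MorphismProperty B := fun _ _ m => Mono m

/-- ordinary epimorphisms, as a class. -/
def ordEpi : MorphismProperty B := fun _ _ e => Epi e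

/-- ordinary strong monomorphisms. -/
def ordStrongMono : MorphismProperty B := fun _ _ m =>
  Mono m ∧ ∀ ⦃A₁ A₂ : B⦄ (e : A₁ ⟶ A₂), Epi e → OrdOrth B e m

/-- ordinary strong epimorphisms. -/
def ordStrongEpi : MorphismProperty B := fun _ _ e =>
  Epi e ∧ ∀ ⦃X₁ X₂ : B⦄ (m : X₁ ⟶ X₂), Mono m → OrdOrth B e m

/-- closure under composition with isomorphisms on either side. -/
def ClosedUnderIsoComp (E : MorphismProperty B) : Prop :=
  (∀ ⦃X Y Z : B⦄ (e : X ⟶ Y) (i : Y ⟶ Z), E e → IsIso i → E (e ≫ i)) ∧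
  (∀ ⦃X Y Z : B⦄ (i : X ⟶ Y) (e : Y ⟶ Z), IsIso i → E e → E (i ≫ e))

/-- a commutative square which is a `V`-pullback: it is sent to a pullback square
in `V` by every hom functor `B(A,-)`. -/
def IsVPullbackSq {P X Y Z : B} (p₁ : P ⟶ X) (p₂ : P ⟶ Y) (f : X ⟶ Z) (g : Y ⟶ Z) : Prop :=
  p₁ ≫ f = p₂ ≫ g ∧
    ∀ A : B, IsPullback (eHomWhiskerLeft V A p₁) (eHomWhiskerLeft V A p₂)
      (eHomWhiskerLeft V A f) (eHomWhiskerLeft V A g)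

/-- a commutative square which is a `V`-pushout: it is sent to a pullback square
in `V` by every hom functor `B(-,A)`. -/
def IsVPushoutSq {X Y₁ Y₂ Q : B} (f₁ : X ⟶ Y₁) (f₂ : X ⟶ Y₂) (i₁ : Y₁ ⟶ Q) (i₂ : Y₂ ⟶ Q) :
    Prop :=
  f₁ ≫ i₁ = f₂ ≫ i₂ ∧
    ∀ A : B, IsPullback (eHomWhiskerRight V i₁ A) (eHomWhiskerRight V i₂ A)
      (eHomWhiskerRight V f₁ A) (eHomWhiskerRight V f₂ A)

/-- `B` has `V`-kernel pairs. -/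
def HasVKernelPairs : Prop :=
  ∀ ⦃X Y : B⦄ (f : X ⟶ Y), ∃ (P : B) (p₁ p₂ : P ⟶ X), IsVPullbackSq V B p₁ p₂ f f

/-- `B` has `V`-cokernel pairs. -/
def HasVCokernelPairs : Prop :=
  ∀ ⦃X Y : B⦄ (f : X ⟶ Y), ∃ (Q : B) (i₁ i₂ : Y ⟶ Q), IsVPushoutSq V B f f i₁ i₂

/-- `m : P ⟶ C` is a `V`-fibre-product (`V`-wide-pullback) of the family `f i : X i ⟶ C`,
with projections `π i`. -/
def IsVFibreProduct {ι : Type w} {C : B} {X : ι → B} (f : ∀ i, X i ⟶ C)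
    {P : B} (m : P ⟶ C) (π : ∀ i, P ⟶ X i) : Prop :=
  (∀ i, π i ≫ f i = m) ∧
    ∀ (A : B) (Z : V) (z : Z ⟶ (A ⟶[V] C)) (zi : ∀ i, Z ⟶ (A ⟶[V] X i)),
      (∀ i, zi i ≫ eHomWhiskerLeft V A (f i) = z) →
        ∃! t : Z ⟶ (A ⟶[V] P), t ≫ eHomWhiskerLeft V A m = z ∧
          ∀ i, t ≫ eHomWhiskerLeft V A (π i) = zi i

/-- `m : P ⟶ C` is an ordinary fibre product (wide pullback) of the family `f i : X i ⟶ C`. -/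
def OrdIsFibreProduct {ι : Type w} {C : B} {X : ι → B} (f : ∀ i, X i ⟶ C)
    {P : B} (m : P ⟶ C) (π : ∀ i, P ⟶ X i) : Prop :=
  (∀ i, π i ≫ f i = m) ∧
    ∀ ⦃W' : B⦄ (z : W' ⟶ C) (zi : ∀ i, W' ⟶ X i), (∀ i, zi i ≫ f i = z) →
      ∃! t : W' ⟶ P, t ≫ m = z ∧ ∀ i, t ≫ π i = zi i

/-- a cone is a `V`-limit cone: it is sent to a limit cone in `V` by every `B(A,-)`. -/
def IsVLimitCone {J : Type u₃} [Category.{v₃} J] {D : J ⥤ B} (c : Cone D) : Prop :=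
  ∀ (A : B) (Z : V) (z : ∀ j : J, Z ⟶ (A ⟶[V] D.obj j)),
    (∀ ⦃j j' : J⦄ (φ : j ⟶ j'), z j ≫ eHomWhiskerLeft V A (D.map φ) = z j') →
      ∃! t : Z ⟶ (A ⟶[V] c.pt), ∀ j, t ≫ eHomWhiskerLeft V A (c.π.app j) = z j

/-- a cocone is a `V`-colimit cocone: it is sent to a limit cone in `V` by every `B(-,A)`. -/
def IsVColimitCocone {J : Type u₃} [Category.{v₃} J] {D : J ⥤ B} (c : Cocone D) : Prop :=
  ∀ (A : B) (Z : V) (z : ∀ j : J, Z ⟶ (D.obj j ⟶[V] A)),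
    (∀ ⦃j j' : J⦄ (φ : j ⟶ j'), z j' ≫ eHomWhiskerRight V (D.map φ) A = z j) →
      ∃! t : Z ⟶ (c.pt ⟶[V] A), ∀ j, t ≫ eHomWhiskerRight V (c.ι.app j) A = z j

/-- `B` has small `V`-limits. -/
def HasSmallVLimits : Prop :=
  ∀ (J : Type v₂) [SmallCategory J] (D : J ⥤ B), ∃ c : Cone D, IsVLimitCone V B c

/-- `B` has small `V`-colimits. -/
def HasSmallVColimits : Prop :=
  ∀ (J : Type v₂) [SmallCategory J] (D : J ⥤ B), ∃ c : Cocone D, IsVColimitCocone V B c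

/-- `B` has finite `V`-limits. -/
def HasFiniteVLimits : Prop :=
  ∀ (J : Type) [SmallCategory J] [FinCategory J] (D : J ⥤ B),
    ∃ c : Cone D, IsVLimitCone V B c

/-- `B` is well-powered with respect to the class `M`: every object has,
up to isomorphism, only a set of `M`-subobjects. -/
def WellPoweredWrt (M : MorphismProperty B) : Prop :=
  ∀ X : B, ∃ (ι : Type v₂) (Y : ι → B) (f : ∀ i, Y i ⟶ X), (∀ i, M (f i)) ∧
    ∀ ⦃Z : B⦄ (g : Z ⟶ X), M g → ∃ (i : ι) (h : Z ≅ Y i), h.hom ≫ f i = g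

/-- `B` is co-well-powered with respect to the class `E`. -/
def CoWellPoweredWrt (E : MorphismProperty B) : Prop :=
  ∀ X : B, ∃ (ι : Type v₂) (Y : ι → B) (f : ∀ i, X ⟶ Y i), (∀ i, E (f i)) ∧
    ∀ ⦃Z : B⦄ (g : X ⟶ Z), E g → ∃ (i : ι) (h : Y i ≅ Z), f i ≫ h.hom = g

/-- comparison morphism `B(T, X) ⟶ [v, B(A, X)]` in `V` induced by a
unit `η : v ⟶ B(A, T)`, where `T` is a candidate tensor `v ⊗ A`. -/
def tensorComparison {v : V} {A T : B} (η : v ⟶ (A ⟶[V] T)) (X : B) :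
    (T ⟶[V] X) ⟶ (ihom v).obj (A ⟶[V] X) :=
  MonoidalClosed.curry (eComp V A T X) ≫ (MonoidalClosed.pre η).app (A ⟶[V] X)

/-- `η : v ⟶ B(A,T)` exhibits `T` as a tensor `v ⊗ A` in the enriched sense. -/
def IsTensorUnit (v : V) (A T : B) (η : v ⟶ (A ⟶[V] T)) : Prop :=
  ∀ X : B, IsIso (tensorComparison V B η X)

/-- `B` is tensored over `V`. -/
def Tensored : Prop :=
  ∀ (v : V) (A : B), ∃ (T : B) (η : v ⟶ (A ⟶[V] T)), IsTensorUnit V B v A T η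

/-- `E` is closed under tensors: whenever tensors exist, `v ⊗ e` lies in `E` for `e ∈ E`. -/
def ClosedUnderTensors (E : MorphismProperty B) : Prop :=
  ∀ (v : V) ⦃A₁ A₂ : B⦄ (e : A₁ ⟶ A₂) {T₁ T₂ : B}
    (η₁ : v ⟶ (A₁ ⟶[V] T₁)) (η₂ : v ⟶ (A₂ ⟶[V] T₂)),
    IsTensorUnit V B v A₁ T₁ η₁ → IsTensorUnit V B v A₂ T₂ η₂ → E e →
      ∀ t : T₁ ⟶ T₂, η₁ ≫ eHomWhiskerLeft V A₁ t = η₂ ≫ eHomWhiskerRight V e T₂ → E t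

/-- comparison morphism `B(A, C) ⟶ [v, B(A, X)]` in `V` induced by a
counit `ε : v ⟶ B(C, X)`, where `C` is a candidate cotensor `[v, X]`. -/
def cotensorComparison {v : V} {C X : B} (ε : v ⟶ (C ⟶[V] X)) (A : B) :
    (A ⟶[V] C) ⟶ (ihom v).obj (A ⟶[V] X) :=
  MonoidalClosed.curry ((β_ (C ⟶[V] X) (A ⟶[V] C)).hom ≫ eComp V A C X) ≫
    (MonoidalClosed.pre ε).app (A ⟶[V] X)

/-- `ε : v ⟶ B(C,X)` exhibits `C` as a cotensor `[v, X]` in the enriched sense. -/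
def IsCotensorCounit (v : V) (X C : B) (ε : v ⟶ (C ⟶[V] X)) : Prop :=
  ∀ A : B, IsIso (cotensorComparison V B ε A)

/-- `B` is cotensored over `V`. -/
def Cotensored : Prop :=
  ∀ (v : V) (X : B), ∃ (C : B) (ε : v ⟶ (C ⟶[V] X)), IsCotensorCounit V B v X C ε

/-- `M` is closed under cotensors: `[v, m]` lies in `M` for `m ∈ M`. -/
def ClosedUnderCotensors (M : MorphismProperty B) : Prop :=
  ∀ (v : V) ⦃X₁ X₂ : B⦄ (m : X₁ ⟶ X₂) {C₁ C₂ : B}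
    (ε₁ : v ⟶ (C₁ ⟶[V] X₁)) (ε₂ : v ⟶ (C₂ ⟶[V] X₂)),
    IsCotensorCounit V B v X₁ C₁ ε₁ → IsCotensorCounit V B v X₂ C₂ ε₂ → M m →
      ∀ t : C₁ ⟶ C₂, ε₁ ≫ eHomWhiskerLeft V C₁ m = ε₂ ≫ eHomWhiskerRight V t X₂ → M t

/-- a `V`-functor from a `V`-category `J` to an enriched ordinary category `D`. -/
structure VFunctor (J : Type u₃) [EnrichedCategory V J]
    (D : Type u₄) [Category.{v₄} D] [EnrichedOrdinaryCategory V D] where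
  obj : J → D
  emap : ∀ X Y : J, (X ⟶[V] Y) ⟶ (obj X ⟶[V] obj Y)
  emap_id : ∀ X : J, eId V X ≫ emap X X = eId V (obj X)
  emap_comp : ∀ X Y Z : J,
    eComp V X Y Z ≫ emap X Z = (emap X Y ⊗ₘ emap Y Z) ≫ eComp V (obj X) (obj Y) (obj Z)

/-- the underlying action of a `V`-functor on ordinary morphisms. -/
def VFunctor.map' {J : Type u₃} [Category.{v₃} J] [EnrichedOrdinaryCategory V J]
    {D : Type u₄} [Category.{v₄} D] [EnrichedOrdinaryCategory V D]
    (F : VFunctor V J D) {X Y : J} (f : X ⟶ Y) : F.obj X ⟶ F.obj Y :=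
  (eHomEquiv V).symm (eHomEquiv V f ≫ F.emap X Y)

/-- a `V`-adjunction `F ⊣ G`, given by a `V`-natural isomorphism
`D(F A, X) ≅ A(A, G X)` of hom-objects. -/
structure VAdjunction {A : Type u₃} [Category.{v₃} A] [EnrichedOrdinaryCategory V A]
    {D : Type u₄} [Category.{v₄} D] [EnrichedOrdinaryCategory V D]
    (F : VFunctor V A D) (G : VFunctor V D A) where
  iso : ∀ (X : A) (Y : D), (F.obj X ⟶[V] Y) ≅ (X ⟶[V] G.obj Y)
  nat_right : ∀ (X : A) (Y Y' : D),
    eComp V (F.obj X) Y Y' ≫ (iso X Y').hom =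
      ((iso X Y).hom ⊗ₘ G.emap Y Y') ≫ eComp V X (G.obj Y) (G.obj Y')
  nat_left : ∀ (X X' : A) (Y : D),
    (F.emap X X' ▷ (F.obj X' ⟶[V] Y)) ≫ eComp V (F.obj X) (F.obj X') Y ≫ (iso X Y).hom =
      ((X ⟶[V] X') ◁ (iso X' Y).hom) ≫ eComp V X X' (G.obj Y)

/-- a `V`-functor `J → V` (a weight), presented by its uncurried action. -/
structure VWeight (J : Type u₃) [EnrichedCategory V J] where
  obj : J → V
  act : ∀ j j' : J, obj j ⊗ (j ⟶[V] j') ⟶ obj j'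
  act_id : ∀ j : J, (obj j ◁ eId V j) ≫ act j j = (ρ_ (obj j)).hom
  act_comp : ∀ j j' j'' : J,
    (α_ (obj j) (j ⟶[V] j') (j' ⟶[V] j'')).inv ≫ (act j j' ▷ (j' ⟶[V] j'')) ≫ act j' j'' =
      (obj j ◁ eComp V j j' j'') ≫ act j j''

/-- a `V`-natural transformation between `V`-functors. -/
structure VNatTrans {J : Type u₃} [EnrichedCategory V J]
    {D : Type u₄} [Category.{v₄} D] [EnrichedOrdinaryCategory V D]
    (F G : VFunctor V J D) where
  app : ∀ j : J, F.obj j ⟶ G.obj j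
  naturality : ∀ j j' : J,
    F.emap j j' ≫ eHomWhiskerLeft V (F.obj j) (app j') =
      G.emap j j' ≫ eHomWhiskerRight V (app j) (G.obj j')

/-- `cone` exhibits `L` as the `V`-enriched weighted (indexed) limit `[W, F]`. -/
structure IsWeightedLimit {J : Type u₃} [EnrichedCategory V J]
    {D : Type u₄} [Category.{v₄} D] [EnrichedOrdinaryCategory V D]
    (W : VWeight V J) (F : VFunctor V J D) (L : D)
    (cone : ∀ j : J, W.obj j ⟶ (L ⟶[V] F.obj j)) : Prop where
  natural : ∀ j j' : J,
    W.act j j' ≫ cone j' =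
      (cone j ▷ (j ⟶[V] j')) ≫ ((L ⟶[V] F.obj j) ◁ F.emap j j') ≫
        eComp V L (F.obj j) (F.obj j')
  universal : ∀ (A : D) (Z : V) (μ : ∀ j : J, Z ⊗ W.obj j ⟶ (A ⟶[V] F.obj j)),
    (∀ j j' : J,
      (Z ◁ W.act j j') ≫ μ j' =
        (α_ Z (W.obj j) (j ⟶[V] j')).inv ≫ (μ j ▷ (j ⟶[V] j')) ≫
          ((A ⟶[V] F.obj j) ◁ F.emap j j') ≫ eComp V A (F.obj j) (F.obj j')) →
      ∃! t : Z ⟶ (A ⟶[V] L), ∀ j : J,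
        (t ▷ W.obj j) ≫ ((A ⟶[V] L) ◁ cone j) ≫ eComp V A L (F.obj j) = μ j

/-- `B` is `V`-finitely-well-complete: it has finite `V`-limits and `V`-intersections
of arbitrary class-indexed families of `V`-strong monomorphisms. -/
def VFinitelyWellComplete : Prop :=
  HasFiniteVLimits V B ∧
    ∀ {ι : Type (max u₂ v₂)} {C : B} (X : ι → B) (f : ∀ i, X i ⟶ C),
      (∀ i, vStrongMono V B (f i)) →
        ∃ (P : B) (m : P ⟶ C) (π : ∀ i, P ⟶ X i), IsVFibreProduct V B f m π

/-- `B` is finitely well-complete (ordinary sense): it has finite limits and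
intersections of arbitrary class-indexed families of strong monomorphisms. -/
def OrdFinitelyWellComplete : Prop :=
  HasFiniteLimits B ∧
    ∀ {ι : Type (max u₂ v₂)} {C : B} (X : ι → B) (f : ∀ i, X i ⟶ C),
      (∀ i, ordStrongMono B (f i)) →
        ∃ (P : B) (m : P ⟶ C) (π : ∀ i, P ⟶ X i), OrdIsFibreProduct B f m π

/-!
Global elements `𝟙_ V ⟶ B(A, X)` are the morphisms `A ⟶ X`, so evaluating the pullback square
of a `V`-orthogonality at them yields unique diagonal fillers: `V`-orthogonality implies ordinary
orthogonality, whence `E^{↓V} ⊆ E^{↓}` and `M^{↑V} ⊆ M^{↑}`. Conversely, if `f ∈ E^{↓}` factors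
as `e ≫ m` with `e ∈ E`, `m ∈ M`, the usual retract argument makes `e` invertible, and
`M = E^{↓V}` is closed under precomposition with isomorphisms, so `f ∈ M`; dually for `M^{↑}`.
-/

section

variable {V B}
omit [SymmetricCategory V] [MonoidalClosed V]

lemma eHomEquiv_comp_eq_comp_eHomWhiskerLeft {X Y Z : B} (f : X ⟶ Y) (g : Y ⟶ Z) :
    eHomEquiv V (f ≫ g) = eHomEquiv V f ≫ eHomWhiskerLeft V X g := by
  simp only [eHomEquiv_comp, eHomWhiskerLeft, MonoidalCategory.tensorHom_def]
  rw [rightUnitor_inv_naturality_assoc, ← unitors_inv_equal]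
  simp

lemma eHomEquiv_comp_eq_comp_eHomWhiskerRight {X Y Z : B} (f : X ⟶ Y) (g : Y ⟶ Z) :
    eHomEquiv V (f ≫ g) = eHomEquiv V g ≫ eHomWhiskerRight V f Z := by
  simp only [eHomEquiv_comp, eHomWhiskerRight, tensorHom_def']
  rw [leftUnitor_inv_naturality_assoc]
  simp

lemma VOrth.ordOrth {A₁ A₂ X₁ X₂ : B} {e : A₁ ⟶ A₂} {m : X₁ ⟶ X₂} (h : VOrth V B e m) :
    OrdOrth B e m := by
  intro u v huv
  have hsq : eHomEquiv V v ≫ eHomWhiskerRight V e X₂ =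
      eHomEquiv V u ≫ eHomWhiskerLeft V A₁ m := by
    rw [← eHomEquiv_comp_eq_comp_eHomWhiskerRight, ← eHomEquiv_comp_eq_comp_eHomWhiskerLeft, huv]
  refine ⟨(eHomEquiv V).symm (h.lift _ _ hsq), ⟨?_, ?_⟩, fun d ⟨hed, hdm⟩ => ?_⟩
  · rw [← (eHomEquiv V).apply_eq_iff_eq, eHomEquiv_comp_eq_comp_eHomWhiskerRight,
      Equiv.apply_symm_apply, h.lift_snd]
  · rw [← (eHomEquiv V).apply_eq_iff_eq, eHomEquiv_comp_eq_comp_eHomWhiskerLeft,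
      Equiv.apply_symm_apply, h.lift_fst]
  · rw [Equiv.eq_symm_apply]
    apply h.hom_ext
    · rw [h.lift_fst, ← eHomEquiv_comp_eq_comp_eHomWhiskerLeft, hdm]
    · rw [h.lift_snd, ← eHomEquiv_comp_eq_comp_eHomWhiskerRight, hed]

lemma VOrth.isIso_comp {A₁ A₂ X₀ X₁ X₂ : B} {e : A₁ ⟶ A₂} (i : X₀ ⟶ X₁) [IsIso i]
    {m : X₁ ⟶ X₂} (h : VOrth V B e m) : VOrth V B e (i ≫ m) := by
  have : IsIso (eHomWhiskerLeft V A₂ i) := Functor.map_isIso (eCoyoneda V A₂) i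
  have : IsIso (eHomWhiskerLeft V A₁ i) := Functor.map_isIso (eCoyoneda V A₁) i
  have hi : IsPullback (eHomWhiskerLeft V A₂ i) (eHomWhiskerRight V e X₀)
      (eHomWhiskerRight V e X₁) (eHomWhiskerLeft V A₁ i) :=
    .of_horiz_isIso ⟨eHom_whisker_exchange V e i⟩
  simpa only [VOrth, eHomWhiskerLeft_comp] using hi.paste_horiz h

lemma VOrth.comp_isIso {A₁ A₂ A₃ X₁ X₂ : B} {e : A₁ ⟶ A₂} (i : A₂ ⟶ A₃) [IsIso i]
    {m : X₁ ⟶ X₂} (h : VOrth V B e m) : VOrth V B (e ≫ i) m := by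
  have : IsIso (eHomWhiskerRight V i X₁) :=
    inferInstanceAs (IsIso (((eHomFunctor V B).map i.op).app X₁))
  have : IsIso (eHomWhiskerRight V i X₂) :=
    inferInstanceAs (IsIso (((eHomFunctor V B).map i.op).app X₂))
  have hi : IsPullback (eHomWhiskerLeft V A₃ m) (eHomWhiskerRight V i X₁)
      (eHomWhiskerRight V i X₂) (eHomWhiskerLeft V A₂ m) :=
    .of_vert_isIso ⟨eHom_whisker_exchange V i m⟩
  simpa only [VOrth, eHomWhiskerRight_comp] using hi.paste_vert h

instance vRlp_respectsLeft_isomorphisms (H : MorphismProperty B) :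
    (vRlp V B H).RespectsLeft (.isomorphisms B) where
  precomp i (_ : IsIso i) _ hm _ _ e he := (hm e he).isIso_comp i

instance vLlp_respectsRight_isomorphisms (H : MorphismProperty B) :
    (vLlp V B H).RespectsRight (.isomorphisms B) where
  postcomp i (_ : IsIso i) _ he _ _ m hm := (he m hm).comp_isIso i

lemma vRlp_le_ordRlp (H : MorphismProperty B) : vRlp V B H ≤ ordRlp B H :=
  fun _ _ _ hm _ _ e he => (hm e he).ordOrth

lemma vLlp_le_ordLlp (H : MorphismProperty B) : vLlp V B H ≤ ordLlp B H :=
  fun _ _ _ he _ _ m hm => (he m hm).ordOrth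

lemma isIso_of_ordOrth_comp_right {X Y Z : B} {e : X ⟶ Y} {m : Y ⟶ Z} (hem : OrdOrth B e m)
    (h : OrdOrth B e (e ≫ m)) : IsIso e := by
  obtain ⟨r, ⟨her, hrm⟩, -⟩ := h (𝟙 X) m (by simp)
  obtain ⟨_, -, huniq⟩ := hem e m rfl
  refine ⟨r, her, ?_⟩
  rw [huniq (r ≫ e) ⟨by rw [reassoc_of% her], by rw [Category.assoc, hrm]⟩, huniq (𝟙 Y) (by simp)]

lemma isIso_of_ordOrth_comp_left {X Y Z : B} {e : X ⟶ Y} {m : Y ⟶ Z} (hem : OrdOrth B e m)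
    (h : OrdOrth B (e ≫ m) m) : IsIso m := by
  obtain ⟨s, ⟨hes, hsm⟩, -⟩ := h e (𝟙 Z) (by simp)
  obtain ⟨_, -, huniq⟩ := hem e m rfl
  refine ⟨s, ?_, hsm⟩
  rw [huniq (m ≫ s) ⟨by rw [← Category.assoc, hes], by rw [Category.assoc, hsm, Category.comp_id]⟩,
    huniq (𝟙 Y) (by simp)]

lemma ordRlp_le_of_factorizationsExist {E M : MorphismProperty B}
    [M.RespectsLeft (.isomorphisms B)]
    (hfac : FactorizationsExist B E M) (horth : E ≤ ordLlp B M) :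
    ordRlp B E ≤ M := by
  intro _ _ f hf
  obtain ⟨_, e, m, he, hm, rfl⟩ := hfac f
  have : IsIso e := isIso_of_ordOrth_comp_right (horth e he m hm) (hf e he)
  exact MorphismProperty.RespectsLeft.precomp (Q := .isomorphisms B) e this m hm

lemma ordLlp_le_of_factorizationsExist {E M : MorphismProperty B}
    [E.RespectsRight (.isomorphisms B)]
    (hfac : FactorizationsExist B E M) (horth : E ≤ ordLlp B M) :
    ordLlp B M ≤ E := by
  intro _ _ f hf
  obtain ⟨_, e, m, he, hm, rfl⟩ := hfac f
  have : IsIso m := isIso_of_ordOrth_comp_left (horth e he m hm) (hf m hm)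
  exact MorphismProperty.RespectsRight.postcomp (Q := .isomorphisms B) m this e he

end

/-- `(E,M)` is a `V`-factorization system iff it is an ordinary factorization system
and each `e ∈ E` is `V`-orthogonal to each `m ∈ M`. -/
theorem stmt4 (E M : MorphismProperty B) :
    IsVFactorizationSystem V B E M ↔
      (IsOrdFactorizationSystem B E M ∧
        ∀ ⦃A₁ A₂ X₁ X₂ : B⦄ (e : A₁ ⟶ A₂) (m : X₁ ⟶ X₂), E e → M m → VOrth V B e m) := by
  constructor
  · rintro ⟨⟨hrlp, hllp⟩, hfac⟩
    have horth : E ≤ ordLlp B M := hllp ▸ vLlp_le_ordLlp M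
    have : M.RespectsLeft (.isomorphisms B) := hrlp ▸ inferInstance
    have : E.RespectsRight (.isomorphisms B) := hllp ▸ inferInstance
    refine ⟨⟨⟨?_, ?_⟩, hfac⟩, fun _ _ _ _ e m he hm => (hllp ▸ he : vLlp V B M e) m hm⟩
    · exact le_antisymm (ordRlp_le_of_factorizationsExist hfac horth)
        fun _ _ m hm _ _ e he => horth e he m hm
    · exact le_antisymm (ordLlp_le_of_factorizationsExist hfac horth) horth
  · rintro ⟨⟨⟨hrlp, hllp⟩, hfac⟩, hvorth⟩
    refine ⟨⟨?_, ?_⟩, hfac⟩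
    · exact le_antisymm (hrlp ▸ vRlp_le_ordRlp E) fun _ _ m hm _ _ e he => hvorth e m he hm
    · exact le_antisymm (hllp ▸ vLlp_le_ordLlp M) fun _ _ e he _ _ m hm => hvorth e m he hm

end EnrichedFS
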